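/- Let $\Omega(p) = 1 - \frac{1}{2}\mathrm{erfc}\left(\frac{p - \epsilon + \beta(Q - B - \mu)}{\sqrt{2}\sigma\beta}\right)$ and $\widetilde{EC}(p) = C_0 + (p - C_0)(1 - e^{-\nu \Omega(p)})$ with $\nu > 0$, $\sigma, \beta > 0$, $C_0 > \epsilon \ge 0$. If $B + \mu \le Q$, then $\widetilde{EC}$ is convex on the interval $[\epsilon, C_0]$. -/

import Mathlib

/-!
With `Ψ x = ∫₀ˣ exp (-s²)` and `g(p) = (p - ε + β(Q - B - μ)) / (√2 σ β)`, the splitting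
`∫_{(t,∞)} = ∫_{(0,∞)} - ∫₀ᵗ` writes `ν Ω = A + K Ψ ∘ g` with `K ≥ 0`. Then
`EC(p) = C₀ + (p - C₀) h(p)` with `h = 1 - exp (-ν Ω)`, and `EC'' = 2 h' + (p - C₀) h''`.
On `[ε, C₀]` the factor `p - C₀` is nonpositive, `h' ≥ 0`, and `h'' ≤ 0` because `ν Ω` is
increasing and concave there: `B + μ ≤ Q` gives `g ≥ 0`, where the Gaussian density decreases.
-/

open Set

section

open Real

noncomputable def gaussIntegral (x : ℝ) : ℝ := ∫ s in (0 : ℝ)..x, exp (-s ^ 2)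

lemma integrable_exp_neg_sq : MeasureTheory.Integrable fun s : ℝ => exp (-s ^ 2) := by
  simpa using integrable_exp_neg_mul_sq one_pos

lemma integral_Ioi_exp_neg_sq (t : ℝ) :
    ∫ s in Ioi t, exp (-s ^ 2) = √π / 2 - gaussIntegral t := by
  have hsplit := intervalIntegral.integral_interval_add_Ioi (a := 0) (b := t)
    integrable_exp_neg_sq.integrableOn integrable_exp_neg_sq.integrableOn
  have hhalf : ∫ s in Ioi (0 : ℝ), exp (-s ^ 2) = √π / 2 := by
    simpa using integral_gaussian_Ioi 1
  rw [gaussIntegral, ← hhalf, ← hsplit, add_sub_cancel_left]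

lemma hasDerivAt_gaussIntegral (x : ℝ) : HasDerivAt gaussIntegral (exp (-x ^ 2)) x := by
  have hcont : Continuous fun s : ℝ => exp (-s ^ 2) := by fun_prop
  exact intervalIntegral.integral_hasDerivAt_right (hcont.intervalIntegrable _ _)
    (hcont.stronglyMeasurableAtFilter _ _) hcont.continuousAt

lemma hasDerivAt_exp_neg_sq (x : ℝ) :
    HasDerivAt (fun x => exp (-x ^ 2)) (-2 * x * exp (-x ^ 2)) x := by
  refine ((hasDerivAt_pow 2 x).neg).exp.congr_deriv ?_
  simp only [Pi.neg_apply]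
  push_cast
  ring

variable {a b : ℝ}

theorem convexOn_Icc_sub_mul {h h' h'' : ℝ → ℝ} (hh : ContinuousOn h (Icc a b))
    (hh' : ∀ x ∈ Ioo a b, HasDerivAt h (h' x) x) (hh'' : ∀ x ∈ Ioo a b, HasDerivAt h' (h'' x) x)
    (hmono : ∀ x ∈ Ioo a b, 0 ≤ h' x) (hconc : ∀ x ∈ Ioo a b, h'' x ≤ 0) :
    ConvexOn ℝ (Icc a b) fun x => (x - b) * h x := by
  refine convexOn_of_hasDerivWithinAt2_nonneg (f' := fun x => h x + (x - b) * h' x)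
    (f'' := fun x => 2 * h' x + (x - b) * h'' x) (convex_Icc a b)
    ((continuousOn_id.sub continuousOn_const).mul hh) ?_ ?_ ?_ <;>
    rw [interior_Icc] <;> intro x hx
  · refine (((hasDerivAt_id x).sub_const b).mul (hh' x hx)).hasDerivWithinAt.congr_deriv ?_
    simp
  · refine ((hh' x hx).add (((hasDerivAt_id x).sub_const b).mul (hh'' x hx))).hasDerivWithinAt
      |>.congr_deriv ?_
    simp only [id_eq]
    ring
  · nlinarith [hmono x hx, hconc x hx, hx.2]

theorem convexOn_Icc_sub_mul_one_sub_exp_neg {W W' W'' : ℝ → ℝ} (hW : ContinuousOn W (Icc a b))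
    (hW' : ∀ x ∈ Ioo a b, HasDerivAt W (W' x) x) (hW'' : ∀ x ∈ Ioo a b, HasDerivAt W' (W'' x) x)
    (hmono : ∀ x ∈ Ioo a b, 0 ≤ W' x) (hconc : ∀ x ∈ Ioo a b, W'' x ≤ 0) :
    ConvexOn ℝ (Icc a b) fun x => (x - b) * (1 - exp (-W x)) := by
  refine convexOn_Icc_sub_mul (h' := fun x => W' x * exp (-W x))
    (h'' := fun x => (W'' x - W' x ^ 2) * exp (-W x)) (by fun_prop) (fun x hx => ?_)
    (fun x hx => ?_) (fun x hx => by have := hmono x hx; positivity) (fun x hx => ?_)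
  · exact (((hW' x hx).neg.exp).const_sub 1).congr_deriv (by simp only [Pi.neg_apply]; ring)
  · exact ((hW'' x hx).mul (hW' x hx).neg.exp).congr_deriv (by simp only [Pi.neg_apply]; ring)
  · exact mul_nonpos_of_nonpos_of_nonneg (by nlinarith [hconc x hx]) (exp_pos _).le

theorem convexOn_Icc_sub_mul_one_sub_exp_neg_gaussIntegral {A K c s : ℝ} (hK : 0 ≤ K)
    (hs : 0 < s) (hac : 0 ≤ a + c) :
    ConvexOn ℝ (Icc a b) fun p => (p - b) * (1 - exp (-(A + K * gaussIntegral ((p + c) / s)))) := by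
  have hg (x : ℝ) : HasDerivAt (fun p => (p + c) / s) (1 / s) x :=
    ((hasDerivAt_id x).add_const c).div_const s
  have hW (x : ℝ) := (((hasDerivAt_gaussIntegral _).comp x (hg x)).const_mul K).const_add A
  refine convexOn_Icc_sub_mul_one_sub_exp_neg
    (W' := fun p => K * exp (-((p + c) / s) ^ 2) / s)
    (W'' := fun p => K * (-2 * ((p + c) / s) * exp (-((p + c) / s) ^ 2)) / s / s)
    (fun x _ => (hW x).continuousAt.continuousWithinAt)
    (fun x _ => (hW x).congr_deriv (by ring)) (fun x _ => ?_) (fun x _ => by positivity)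
    (fun x hx => ?_)
  · exact (((hasDerivAt_exp_neg_sq _).comp x (hg x)).const_mul K).div_const s
      |>.congr_deriv (by ring)
  · have hg_nonneg : 0 ≤ (x + c) / s := div_nonneg (by linarith [hx.1]) hs.le
    have hdensity : -2 * ((x + c) / s) * exp (-((x + c) / s) ^ 2) ≤ 0 :=
      mul_nonpos_of_nonpos_of_nonneg (by linarith) (exp_pos _).le
    exact div_nonpos_of_nonpos_of_nonneg (div_nonpos_of_nonpos_of_nonneg
      (mul_nonpos_of_nonneg_of_nonpos hK hdensity) hs.le) hs.le

end

theorem stmt_11_general (Q B β μ σ ε C₀ ν : ℝ)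
    (hν : 0 < ν) (hσ : 0 < σ) (hβ : 0 < β)
    (hBμ : B + μ ≤ Q)
    (erfc : ℝ → ℝ)
    (herfc : ∀ t, erfc t = (2 / Real.sqrt π) * ∫ s in Set.Ioi t, Real.exp (-s ^ 2))
    (Ω EC : ℝ → ℝ)
    (hΩ : ∀ p, Ω p = 1 - (1 / 2) * erfc ((p - ε + β * (Q - B - μ)) / (Real.sqrt 2 * σ * β)))
    (hEC : ∀ p, EC p = C₀ + (p - C₀) * (1 - Real.exp (-(ν * Ω p)))) :
    ConvexOn ℝ (Set.Icc ε C₀) EC := by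
  have hνΩ (p : ℝ) : ν * Ω p = ν * (1 - Real.sqrt Real.pi / Real.sqrt π / 2)
      + ν / Real.sqrt π * gaussIntegral ((p + (β * (Q - B - μ) - ε)) / (Real.sqrt 2 * σ * β)) := by
    rw [hΩ, herfc, integral_Ioi_exp_neg_sq]
    ring_nf
  have hconv := convexOn_Icc_sub_mul_one_sub_exp_neg_gaussIntegral (a := ε) (b := C₀)
    (A := ν * (1 - Real.sqrt Real.pi / Real.sqrt π / 2)) (by positivity : 0 ≤ ν / Real.sqrt π)
    (by positivity : 0 < Real.sqrt 2 * σ * β) (by nlinarith : 0 ≤ ε + (β * (Q - B - μ) - ε))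
  refine ((convexOn_const C₀ (convex_Icc ε C₀)).add hconv).congr fun p _ => ?_
  simp only [Pi.add_apply, hEC, hνΩ]

/-- with `Ω(p) = 1 - ½ erfc((p-ε+β(Q-B-μ))/(√2 σ β))` and
`EC(p) = C₀ + (p-C₀)(1 - e^{-ν Ω(p)})`, if `B + μ ≤ Q` then `EC` is convex on
`[ε, C₀]`. -/
theorem stmt_11 (Q B β μ σ ε C₀ ν : ℝ)
    (hν : 0 < ν) (hσ : 0 < σ) (hβ : 0 < β) (hε : 0 ≤ ε) (hC₀ : ε < C₀)
    (hBμ : B + μ ≤ Q)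
    (erfc : ℝ → ℝ)
    (herfc : ∀ t, erfc t = (2 / Real.sqrt π) * ∫ s in Set.Ioi t, Real.exp (-s ^ 2))
    (Ω EC : ℝ → ℝ)
    (hΩ : ∀ p, Ω p = 1 - (1 / 2) * erfc ((p - ε + β * (Q - B - μ)) / (Real.sqrt 2 * σ * β)))
    (hEC : ∀ p, EC p = C₀ + (p - C₀) * (1 - Real.exp (-(ν * Ω p)))) :
    ConvexOn ℝ (Set.Icc ε C₀) EC :=
  stmt_11_general Q B β μ σ ε C₀ ν hν hσ hβ hBμ erfc herfc Ω EC hΩ hEC
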